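/- Let R = R₀ ⊕ R₁ be a Z₂-graded commutative ring such that R₁² is contained in the nilradical of R₀. Then an ideal of R is a Z₂-graded prime ideal if and only if it is a prime ideal of R; moreover these are exactly the ideals p + R₁ with p a prime ideal of R₀. -/

import Mathlib

/-- A `ℤ/2ℤ`-grading on a commutative ring `R`: additive subgroups `R0`, `R1` with
`R = R0 ⊕ R1` (internal direct sum) and `Rᵢ · Rⱼ ⊆ R_{i+j}`. -/
structure Z2Grading (R : Type*) [CommRing R] where
  R0 : AddSubgroup R
  R1 : AddSubgroup R
  one_mem : (1 : R) ∈ R0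
  mul_mem_00 : ∀ {a b : R}, a ∈ R0 → b ∈ R0 → a * b ∈ R0
  mul_mem_01 : ∀ {a b : R}, a ∈ R0 → b ∈ R1 → a * b ∈ R1
  mul_mem_11 : ∀ {a b : R}, a ∈ R1 → b ∈ R1 → a * b ∈ R0
  sup_eq_top : R0 ⊔ R1 = ⊤
  inf_eq_bot : R0 ⊓ R1 = ⊥

/-- The sum `S + T` of two subsets of `R`. -/
def setSum {R : Type*} [CommRing R] (S T : Set R) : Set R :=
  {z : R | ∃ a ∈ S, ∃ b ∈ T, z = a + b}

/-- The additive subgroup of `R` generated by the pairwise products of `S` and `T`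
(i.e. the product `S·T` of an ideal/submodule pair). -/
def mulSet {R : Type*} [CommRing R] (S T : Set R) : AddSubgroup R :=
  AddSubgroup.closure {x : R | ∃ a ∈ S, ∃ b ∈ T, x = a * b}

namespace Z2Grading

variable {R : Type*} [CommRing R] (G : Z2Grading R)

/-- The set of homogeneous elements of `R`, namely `R₀ ∪ R₁`. -/
def homogeneous : Set R := ↑G.R0 ∪ ↑G.R1

/-- `R₁²`, the ideal of `R₀` generated by the products of two elements of `R₁`. -/
def sq : AddSubgroup R := mulSet (↑G.R1) (↑G.R1)

/-- `R₁³ = R₁² · R₁`, an `R₀`-submodule of `R₁`. -/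
def cube : AddSubgroup R := mulSet (↑G.sq) (↑G.R1)

/-- `I` is an ideal of the subring `R₀` (viewed inside `R`). -/
def IsIdeal0 (I : AddSubgroup R) : Prop :=
  (I : Set R) ⊆ ↑G.R0 ∧ ∀ a ∈ G.R0, ∀ x ∈ I, a * x ∈ I

/-- `N` is an `R₀`-submodule of `R₁` (viewed inside `R`). -/
def IsSubmodule1 (N : AddSubgroup R) : Prop :=
  (N : Set R) ⊆ ↑G.R1 ∧ ∀ a ∈ G.R0, ∀ x ∈ N, a * x ∈ N

/-- The residual `(N :_{R₀} R₁) = {a ∈ R₀ : a·R₁ ⊆ N}`. -/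
def residual (N : AddSubgroup R) : AddSubgroup R where
  carrier := {a : R | a ∈ G.R0 ∧ ∀ r ∈ G.R1, a * r ∈ N}
  zero_mem' := ⟨G.R0.zero_mem, fun r _ => by simpa using N.zero_mem⟩
  add_mem' := by
    rintro a b ⟨ha0, ha⟩ ⟨hb0, hb⟩
    exact ⟨G.R0.add_mem ha0 hb0, fun r hr => by
      rw [add_mul]; exact N.add_mem (ha r hr) (hb r hr)⟩
  neg_mem' := by
    rintro a ⟨ha0, ha⟩
    exact ⟨G.R0.neg_mem ha0, fun r hr => by
      rw [neg_mul]; exact N.neg_mem (ha r hr)⟩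

/-- `J` is a `ℤ₂`-graded ideal of `R`: the homogeneous components of each of its
elements again belong to `J`, i.e. `J = (J ∩ R₀) ⊕ (J ∩ R₁)`. -/
def IsGradedIdeal (J : Ideal R) : Prop :=
  ∀ x ∈ J, ∃ a b : R, a ∈ G.R0 ∧ b ∈ G.R1 ∧ a ∈ J ∧ b ∈ J ∧ x = a + b

/-- `J` is a `ℤ₂`-graded prime ideal of `R`. -/
def IsGradedPrime (J : Ideal R) : Prop :=
  G.IsGradedIdeal J ∧ J ≠ ⊤ ∧
    ∀ r ∈ G.homogeneous, ∀ s ∈ G.homogeneous, r * s ∈ J → r ∈ J ∨ s ∈ J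

/-- `J` is a `ℤ₂`-graded maximal ideal of `R`. -/
def IsGradedMaximal (J : Ideal R) : Prop :=
  G.IsGradedIdeal J ∧ J ≠ ⊤ ∧
    ∀ J' : Ideal R, G.IsGradedIdeal J' → J ≤ J' → J' = J ∨ J' = ⊤

/-- `p` is a prime ideal of the subring `R₀`. -/
def IsPrime0 (p : AddSubgroup R) : Prop :=
  G.IsIdeal0 p ∧ (p : Set R) ≠ ↑G.R0 ∧
    ∀ a ∈ G.R0, ∀ b ∈ G.R0, a * b ∈ p → a ∈ p ∨ b ∈ p

/-- `p` is a maximal ideal of the subring `R₀`. -/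
def IsMaximal0 (p : AddSubgroup R) : Prop :=
  G.IsIdeal0 p ∧ (p : Set R) ≠ ↑G.R0 ∧
    ∀ I : AddSubgroup R, G.IsIdeal0 I → p ≤ I → (I : Set R) = ↑p ∨ (I : Set R) = ↑G.R0

/-- `N` is a prime `R₀`-submodule of `R₁`. -/
def IsPrimeSubmodule1 (N : AddSubgroup R) : Prop :=
  G.IsSubmodule1 N ∧ (N : Set R) ≠ ↑G.R1 ∧
    ∀ a ∈ G.R0, ∀ m ∈ G.R1, a * m ∈ N → a ∈ G.residual N ∨ m ∈ N

/-- `N` is a maximal (proper) `R₀`-submodule of `R₁`. -/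
def IsMaximalSubmodule1 (N : AddSubgroup R) : Prop :=
  G.IsSubmodule1 N ∧ (N : Set R) ≠ ↑G.R1 ∧
    ∀ N' : AddSubgroup R, G.IsSubmodule1 N' → N ≤ N' →
      (N' : Set R) = ↑N ∨ (N' : Set R) = ↑G.R1

/-- `R` is a `ℤ₂`-graded integral domain. -/
def IsGradedDomain : Prop :=
  (1 : R) ≠ 0 ∧
    ∀ r ∈ G.homogeneous, ∀ s ∈ G.homogeneous, r * s = 0 → r = 0 ∨ s = 0

/-- `R` is a `ℤ₂`-graded field. -/
def IsGradedField : Prop :=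
  (1 : R) ≠ 0 ∧ ∀ r ∈ G.homogeneous, r ≠ 0 → IsUnit r

/-- `R₀` as a subring of `R`. -/
def toSubring : Subring R where
  carrier := ↑G.R0
  one_mem' := G.one_mem
  mul_mem' := fun ha hb => G.mul_mem_00 ha hb
  zero_mem' := G.R0.zero_mem
  add_mem' := fun ha hb => G.R0.add_mem ha hb
  neg_mem' := fun ha => G.R0.neg_mem ha

/-- The Zariski topology on the homogeneous spectrum `Z₂Spec R`: closed sets are the
`V(I) = {P : I ⊆ P}` for `ℤ₂`-graded ideals `I`. -/
def gradedZariski : TopologicalSpace {Q : Ideal R // G.IsGradedPrime Q} :=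
  TopologicalSpace.generateFrom
    {U : Set {Q : Ideal R // G.IsGradedPrime Q} |
      ∃ I : Ideal R, G.IsGradedIdeal I ∧ U = {P | ¬ I ≤ P.1}}

end Z2Grading


/-!
Every `r ∈ R₁` is nilpotent, since `r² ∈ R₁²`; as homogeneous nilpotents lie in every graded
prime ideal, both prime and graded prime ideals `Q` contain `R₁`. Modulo such a `Q` every element
is congruent to its `R₀`-component, so primality of `Q`, graded or not, amounts to primality of
`Q ∩ R₀` in `R₀`, and `Q = (Q ∩ R₀) + R₁`.
-/

namespace Z2Grading

variable {R : Type*} [CommRing R] (G : Z2Grading R)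

theorem exists_add_eq (x : R) : ∃ a ∈ G.R0, ∃ b ∈ G.R1, a + b = x :=
  AddSubgroup.mem_sup.1 (G.sup_eq_top ▸ AddSubgroup.mem_top x)

theorem eq_zero_of_mem_R0_of_mem_R1 {x : R} (h0 : x ∈ G.R0) (h1 : x ∈ G.R1) : x = 0 := by
  have h : x ∈ G.R0 ⊓ G.R1 := ⟨h0, h1⟩
  rwa [G.inf_eq_bot, AddSubgroup.mem_bot] at h

theorem mul_mem_homogeneous {r s : R} (hr : r ∈ G.homogeneous) (hs : s ∈ G.homogeneous) :
    r * s ∈ G.homogeneous := by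
  rcases hr with hr | hr <;> rcases hs with hs | hs
  · exact Or.inl (G.mul_mem_00 hr hs)
  · exact Or.inr (G.mul_mem_01 hr hs)
  · exact Or.inr (mul_comm s r ▸ G.mul_mem_01 hs hr)
  · exact Or.inl (G.mul_mem_11 hr hs)

theorem pow_mem_homogeneous {r : R} (hr : r ∈ G.homogeneous) (n : ℕ) :
    r ^ n ∈ G.homogeneous := by
  induction n with
  | zero => exact Or.inl (pow_zero r ▸ G.one_mem)
  | succ n ih => exact pow_succ r n ▸ G.mul_mem_homogeneous ih hr

theorem isNilpotent_of_mem_R1 (hnil : ∀ x ∈ G.sq, IsNilpotent x) {r : R} (hr : r ∈ G.R1) :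
    IsNilpotent r :=
  IsNilpotent.of_pow (m := 2) <|
    pow_two r ▸ hnil _ (AddSubgroup.subset_closure ⟨r, hr, r, hr, rfl⟩)

theorem R1_subset_setSum {S : Set R} (h0 : (0 : R) ∈ S) : (G.R1 : Set R) ⊆ setSum S G.R1 :=
  fun b hb => ⟨0, h0, b, hb, (zero_add b).symm⟩

theorem R0_inter_setSum {p : AddSubgroup R} (hp : (p : Set R) ⊆ G.R0) :
    (G.R0 : Set R) ∩ setSum p G.R1 = p := by
  ext x
  constructor
  · rintro ⟨hx, a, ha, b, hb, rfl⟩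
    have hb0 : b = 0 :=
      G.eq_zero_of_mem_R0_of_mem_R1 (by simpa using G.R0.sub_mem hx (hp ha)) hb
    simpa [hb0] using ha
  · exact fun hx => ⟨hp hx, x, hx, 0, G.R1.zero_mem, (add_zero x).symm⟩

variable {G} {Q : Ideal R}

theorem isGradedIdeal_of_R1_subset (hR1 : (G.R1 : Set R) ⊆ Q) : G.IsGradedIdeal Q := by
  intro x hx
  obtain ⟨a, ha, b, hb, rfl⟩ := G.exists_add_eq x
  exact ⟨a, b, ha, hb, (Q.add_mem_iff_left (hR1 hb)).1 hx, hR1 hb, rfl⟩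

theorem setSum_R0_inf_R1 (hR1 : (G.R1 : Set R) ⊆ Q) :
    setSum ↑(G.R0 ⊓ Q.toAddSubgroup) ↑G.R1 = (Q : Set R) := by
  ext x
  constructor
  · rintro ⟨a, ⟨-, ha⟩, b, hb, rfl⟩
    exact Q.add_mem ha (hR1 hb)
  · intro hx
    obtain ⟨a, b, ha, hb, haQ, -, rfl⟩ := isGradedIdeal_of_R1_subset hR1 x hx
    exact ⟨a, ⟨ha, haQ⟩, b, hb, rfl⟩

theorem R1_subset_of_isPrime (hnil : ∀ x ∈ G.sq, IsNilpotent x) (hQ : Q.IsPrime) :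
    (G.R1 : Set R) ⊆ Q := fun _ hr =>
  let ⟨n, hn⟩ := G.isNilpotent_of_mem_R1 hnil hr
  hQ.mem_of_pow_mem n (hn ▸ Q.zero_mem)

theorem isGradedPrime_of_isPrime (hR1 : (G.R1 : Set R) ⊆ Q) (hQ : Q.IsPrime) :
    G.IsGradedPrime Q :=
  ⟨isGradedIdeal_of_R1_subset hR1, hQ.ne_top, fun _ _ _ _ h => hQ.mem_or_mem h⟩

theorem isGradedPrime_of_isPrime0_inf (hR1 : (G.R1 : Set R) ⊆ Q)
    (hp : G.IsPrime0 (G.R0 ⊓ Q.toAddSubgroup)) : G.IsGradedPrime Q := by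
  refine ⟨isGradedIdeal_of_R1_subset hR1, fun htop => hp.2.1 ?_, ?_⟩
  · ext x
    simp [htop]
  · rintro r (hr | hr) s (hs | hs) hrs
    · exact (hp.2.2 r hr s hs ⟨G.mul_mem_00 hr hs, hrs⟩).imp And.right And.right
    · exact Or.inr (hR1 hs)
    · exact Or.inl (hR1 hr)
    · exact Or.inl (hR1 hr)

namespace IsGradedPrime

theorem mem_of_pow_mem (hQ : G.IsGradedPrime Q) {r : R} (hr : r ∈ G.homogeneous) (n : ℕ)
    (h : r ^ n ∈ Q) : r ∈ Q := by
  induction n with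
  | zero => exact absurd ((Ideal.eq_top_iff_one Q).2 (pow_zero r ▸ h)) hQ.2.1
  | succ n ih =>
    rw [pow_succ] at h
    exact (hQ.2.2 _ (G.pow_mem_homogeneous hr n) _ hr h).elim ih id

theorem R1_subset (hnil : ∀ x ∈ G.sq, IsNilpotent x) (hQ : G.IsGradedPrime Q) :
    (G.R1 : Set R) ⊆ Q := fun _ hr =>
  let ⟨n, hn⟩ := G.isNilpotent_of_mem_R1 hnil hr
  hQ.mem_of_pow_mem (Or.inr hr) n (hn ▸ Q.zero_mem)

theorem isPrime0_inf (hQ : G.IsGradedPrime Q) : G.IsPrime0 (G.R0 ⊓ Q.toAddSubgroup) := by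
  refine ⟨⟨fun x hx => hx.1, fun a ha x hx => ⟨G.mul_mem_00 ha hx.1, Q.mul_mem_left a hx.2⟩⟩,
    fun h => hQ.2.1 ?_, fun a ha b hb hab => ?_⟩
  · have h1 : (1 : R) ∈ G.R0 ⊓ Q.toAddSubgroup := by
      rw [← SetLike.mem_coe, h]
      exact G.one_mem
    exact (Ideal.eq_top_iff_one Q).2 h1.2
  · exact (hQ.2.2 a (Or.inl ha) b (Or.inl hb) hab.2).imp (⟨ha, ·⟩) (⟨hb, ·⟩)

theorem isPrime (hR1 : (G.R1 : Set R) ⊆ Q) (hQ : G.IsGradedPrime Q) : Q.IsPrime := by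
  refine ⟨hQ.2.1, fun {x y} hxy => ?_⟩
  obtain ⟨a, ha, b, hb, rfl⟩ := G.exists_add_eq x
  obtain ⟨c, hc, d, hd, rfl⟩ := G.exists_add_eq y
  have hac : a * c ∈ Q := by
    rw [show (a + b) * (c + d) = a * c + ((a + b) * d + b * c) by ring] at hxy
    exact (Q.add_mem_iff_left
      (Q.add_mem (Q.mul_mem_left _ (hR1 hd)) (Q.mul_mem_right _ (hR1 hb)))).1 hxy
  rw [Q.add_mem_iff_left (hR1 hb), Q.add_mem_iff_left (hR1 hd)]
  exact hQ.2.2 a (Or.inl ha) c (Or.inl hc) hac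

end IsGradedPrime

end Z2Grading

/-- if `R₁²` is contained in the nilradical of `R₀`, then an ideal of `R` is
`ℤ₂`-graded prime iff it is prime; moreover these are exactly the ideals `p + R₁` with `p`
a prime ideal of `R₀`. -/
theorem graded_prime_iff_prime_of_nil {R : Type*} [CommRing R] (G : Z2Grading R)
    (hnil : ∀ x ∈ G.sq, IsNilpotent x) (Q : Ideal R) :
    (G.IsGradedPrime Q ↔ Q.IsPrime) ∧
    (G.IsGradedPrime Q ↔
      ∃ p : AddSubgroup R, G.IsPrime0 p ∧ (Q : Set R) = setSum ↑p ↑G.R1) := by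
  refine ⟨⟨fun hQ => hQ.isPrime (hQ.R1_subset hnil),
      fun hQ => Z2Grading.isGradedPrime_of_isPrime (Z2Grading.R1_subset_of_isPrime hnil hQ) hQ⟩,
    fun hQ => ⟨_, hQ.isPrime0_inf, (Z2Grading.setSum_R0_inf_R1 (hQ.R1_subset hnil)).symm⟩, ?_⟩
  rintro ⟨p, hp, hQp⟩
  have hR1 : (G.R1 : Set R) ⊆ Q := hQp ▸ G.R1_subset_setSum p.zero_mem
  have hpQ : G.R0 ⊓ Q.toAddSubgroup = p := SetLike.coe_injective <| by
    rw [AddSubgroup.coe_inf, Submodule.coe_toAddSubgroup, hQp, G.R0_inter_setSum hp.1.1]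
  exact Z2Grading.isGradedPrime_of_isPrime0_inf hR1 (hpQ ▸ hp)
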